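/- Let G be a finite connected graph with at least two vertices that admits a tree decomposition of width at most 3 (i.e., G is a connected partial 3-tree). Then lpt(G) ≤ 3. -/

import Mathlib

open SimpleGraph

/-- `p` is a longest path of `G`: it is a path, and no path of `G` is longer. -/
def IsLongestPath {V : Type*} (G : SimpleGraph V) {u v : V} (p : G.Walk u v) : Prop :=
  p.IsPath ∧ ∀ ⦃a b : V⦄ (q : G.Walk a b), q.IsPath → q.length ≤ p.length

/-- A tree decomposition of `G` over a tree `T`: every vertex lies in some bag, every
edge is contained in some bag, and for every vertex the set of tree nodes whose bag
contains it induces a connected subgraph of `T`. -/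
structure TreeDecomp {V ι : Type*} (G : SimpleGraph V) (T : SimpleGraph ι) where
  isTree : T.IsTree
  bag : ι → Finset V
  bag_cover : ∀ v : V, ∃ t, v ∈ bag t
  bag_edge : ∀ ⦃u v : V⦄, G.Adj u v → ∃ t, u ∈ bag t ∧ v ∈ bag t
  bag_conn : ∀ v : V, (T.induce {t | v ∈ bag t}).Preconnected

/-!
Any two longest paths of a connected graph meet. Hence the subtrees of `T` spanned by the bags
meeting a longest path pairwise intersect, and by the Helly property of subtrees of a tree some
bag `B` meets every longest path. If no three vertices of `B` meet every longest path, then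
`|B| = 4` and every `x ∈ B` lies on a longest path meeting `B` only in `x`. Since the width is
at most `3`, no component of `G - B` is adjacent to all four vertices of `B` (Helly again: some
bag would contain that component's attachments together with one of its vertices).

Such a path splits at `x` into two ears, each running inside one component of `G - B`. If ears
`A`, `A'` of two of these paths meet, rerouting through `A ∪ A'` joins the two other ears `E`, `E'`
into a path, so `|E| + |E'| + 2 ≤ L`. Counting components produces three of the paths that
pairwise cross in three different components; the three resulting inequalities add up to
`3L + 6 ≤ 3L`.
-/

namespace SimpleGraph

variable {V : Type*} {G : SimpleGraph V}

namespace Walk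

theorem IsPath.append {u v w : V} {p : G.Walk u v} {q : G.Walk v w} (hp : p.IsPath)
    (hq : q.IsPath) (h : ∀ z ∈ p.support, z ∈ q.support → z = v) : (p.append q).IsPath := by
  have hq' : (v :: q.support.tail).Nodup := q.cons_tail_support ▸ hq.support_nodup
  rw [List.nodup_cons] at hq'
  rw [isPath_def, support_append, List.nodup_append]
  refine ⟨hp.support_nodup, hq'.2, fun z hz z' hz' hzz' => ?_⟩
  subst hzz'
  exact hq'.1 (h z hz (List.mem_of_mem_tail hz') ▸ hz')

theorem exists_first_mem [DecidableEq V] {u v y : V} (p : G.Walk u v) (hy : y ∈ p.support)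
    {S : Set V} (hyS : y ∈ S) :
    ∃ w ∈ S, ∃ hw : w ∈ p.support, ∀ z ∈ (p.takeUntil w hw).support, z ∈ S → z = w := by
  induction h : (p.takeUntil y hy).length using Nat.strong_induction_on generalizing y with
  | _ n ih =>
    by_cases hfirst : ∀ z ∈ (p.takeUntil y hy).support, z ∈ S → z = y
    · exact ⟨y, hyS, hy, hfirst⟩
    push Not at hfirst
    obtain ⟨z, hz, hzS, hzy⟩ := hfirst
    have hlt := length_takeUntil_lt_length hz hzy
    rw [takeUntil_takeUntil] at hlt
    exact ih _ (h ▸ hlt) _ hzS rfl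

theorem IsPath.exists_split {a b x : V} {p : G.Walk a b} (hp : p.IsPath) (hx : x ∈ p.support) :
    ∃ (q : G.Walk x a) (r : G.Walk x b), q.IsPath ∧ r.IsPath ∧ q.length + r.length = p.length ∧
      (∀ z, z ∈ p.support ↔ z ∈ q.support ∨ z ∈ r.support) ∧
      ∀ z ∈ q.support, z ∈ r.support → z = x := by
  classical
  have hspec := p.take_spec hx
  have hp' : ((p.takeUntil x hx).append (p.dropUntil x hx)).IsPath := by rwa [hspec]
  refine ⟨(p.takeUntil x hx).reverse, p.dropUntil x hx, (hp.takeUntil hx).reverse,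
    hp.dropUntil hx, ?_, fun z => ?_, fun z hz hz' => ?_⟩
  · rw [length_reverse, ← length_append, hspec]
  · rw [support_reverse, List.mem_reverse, ← mem_support_append_iff, hspec]
  · rw [support_reverse, List.mem_reverse] at hz
    by_contra hzx
    exact hp'.ne_of_mem_support_of_append hzx hz hz' rfl

theorem IsPath.exists_long_half {a b x : V} {p : G.Walk a b} (hp : p.IsPath)
    (hx : x ∈ p.support) :
    ∃ (c : V) (q : G.Walk x c), q.IsPath ∧ p.length ≤ 2 * q.length ∧
      ∀ z ∈ q.support, z ∈ p.support := by
  obtain ⟨q, r, hq, hr, hlen, hcov, -⟩ := hp.exists_split hx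
  rcases le_total q.length r.length with h | h
  · exact ⟨b, r, hr, by omega, fun z hz => (hcov z).2 (.inr hz)⟩
  · exact ⟨a, q, hq, by omega, fun z hz => (hcov z).2 (.inl hz)⟩

theorem IsPath.exists_joining_isPath {x x' y y' v : V} {A : G.Walk x y} {A' : G.Walk x' y'}
    (hA : A.IsPath) (hA' : A'.IsPath) (hx : x ∉ A'.support) (hx' : x' ∉ A.support)
    (hv : v ∈ A.support) (hv' : v ∈ A'.support) :
    ∃ R : G.Walk x x', R.IsPath ∧ 2 ≤ R.length ∧
      ∀ z ∈ R.support, z ∈ A.support ∨ z ∈ A'.support := by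
  classical
  obtain ⟨w, hwA', hw, hfirst⟩ := A.exists_first_mem hv (S := {z | z ∈ A'.support}) hv'
  have hR : ((A.takeUntil w hw).append (A'.takeUntil w hwA').reverse).IsPath := by
    refine (hA.takeUntil hw).append (hA'.takeUntil hwA').reverse fun z hz hz' => ?_
    rw [support_reverse, List.mem_reverse] at hz'
    exact hfirst z hz (A'.support_takeUntil_subset_support hwA' hz')
  refine ⟨_, hR, ?_, fun z hz => ?_⟩
  · have h₁ : (A.takeUntil w hw).length ≠ 0 :=
      fun h => hx (eq_of_length_eq_zero h ▸ hwA')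
    have h₂ : (A'.takeUntil w hwA').length ≠ 0 :=
      fun h => hx' (eq_of_length_eq_zero h ▸ hw)
    rw [length_append, length_reverse]
    omega
  · rw [mem_support_append_iff, support_reverse, List.mem_reverse] at hz
    exact hz.imp (A.support_takeUntil_subset_support hw ·)
      (A'.support_takeUntil_subset_support hwA' ·)

end Walk

theorem Connected.exists_isPath_between (hG : G.Connected) {S S' : Set V} {a a' : V}
    (ha : a ∈ S) (ha' : a' ∈ S') :
    ∃ (s s' : V) (r : G.Walk s s'), r.IsPath ∧ (∀ z ∈ r.support, z ∈ S ↔ z = s) ∧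
      ∀ z ∈ r.support, z ∈ S' ↔ z = s' := by
  classical
  obtain ⟨W⟩ := hG.preconnected a a'
  obtain ⟨s', hs'S, hs', hfirst'⟩ := W.exists_first_mem W.end_mem_support ha'
  set W₁ := (W.takeUntil s' hs').reverse
  obtain ⟨s, hsS, hs, hfirst⟩ := W₁.exists_first_mem W₁.end_mem_support ha
  have hsub : ∀ z ∈ (W₁.takeUntil s hs).reverse.bypass.support,
      z ∈ (W₁.takeUntil s hs).support :=
    fun z hz => by simpa using Walk.support_bypass_subset_support _ hz
  refine ⟨s, s', _, Walk.bypass_isPath _, fun z hz => ⟨hfirst z (hsub z hz), ?_⟩,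
    fun z hz => ⟨fun hzS => hfirst' z ?_ hzS, ?_⟩⟩
  · rintro rfl; exact hsS
  · simpa [W₁] using W₁.support_takeUntil_subset_support hs (hsub z hz)
  · rintro rfl; exact hs'S

theorem _root_.IsLongestPath.length_eq {a b c d : V} {p : G.Walk a b} {q : G.Walk c d}
    (hp : IsLongestPath G p) (hq : IsLongestPath G q) : p.length = q.length :=
  le_antisymm (hq.2 _ hp.1) (hp.2 _ hq.1)

theorem _root_.IsLongestPath.exists_mem_support_mem_support (hG : G.Connected) {a b c d : V}
    {p : G.Walk a b} {q : G.Walk c d} (hp : IsLongestPath G p) (hq : IsLongestPath G q) :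
    ∃ z ∈ p.support, z ∈ q.support := by
  by_contra! hpq
  obtain ⟨s, s', r, hr, hrp, hrq⟩ := hG.exists_isPath_between (S := {z | z ∈ p.support})
    (S' := {z | z ∈ q.support}) p.start_mem_support q.start_mem_support
  have hs : s ∈ p.support := (hrp s r.start_mem_support).2 rfl
  have hs' : s' ∈ q.support := (hrq s' r.end_mem_support).2 rfl
  obtain ⟨_, e, he, hpe, hep⟩ := hp.1.exists_long_half hs
  obtain ⟨_, e', he', hqe', he'q⟩ := hq.1.exists_long_half hs'
  have hlong : (e.reverse.append (r.append e')).IsPath := by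
    refine he.reverse.append (hr.append he' fun z hz hz' => (hrq z hz).1 (he'q z hz')) ?_
    intro z hz hz'
    rw [Walk.support_reverse, List.mem_reverse] at hz
    rcases (Walk.mem_support_append_iff _ _).1 hz' with h | h
    · exact (hrp z h).1 (hep z hz)
    · exact (hpq z (hep z hz) (he'q z h)).elim
  have hr₁ : r.length ≠ 0 := fun h => hpq s hs (Walk.eq_of_length_eq_zero h ▸ hs')
  have hlen := hp.2 _ hlong
  rw [Walk.length_append, Walk.length_append, Walk.length_reverse] at hlen
  have := hp.length_eq hq
  omega

section Subtrees

variable {ι : Type*} {T : SimpleGraph ι}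

theorem preconnected_induce_iff_exists_walk {S : Set ι} :
    (T.induce S).Preconnected ↔ ∀ a ∈ S, ∀ b ∈ S, ∃ p : T.Walk a b, ∀ z ∈ p.support, z ∈ S := by
  refine ⟨fun h a ha b hb => ?_, fun h a b => ?_⟩
  · obtain ⟨p⟩ := h ⟨a, ha⟩ ⟨b, hb⟩
    refine ⟨p.map (Embedding.induce S).toHom, fun z hz => ?_⟩
    obtain ⟨z', -, rfl⟩ := List.mem_map.1 (Walk.support_map _ _ ▸ hz)
    exact z'.2
  · obtain ⟨p, hp⟩ := h a a.2 b b.2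
    exact ⟨p.induce S hp⟩

theorem Preconnected.exists_isPath_induce {S : Set ι} (hS : (T.induce S).Preconnected)
    {a b : ι} (ha : a ∈ S) (hb : b ∈ S) :
    ∃ p : T.Walk a b, p.IsPath ∧ ∀ z ∈ p.support, z ∈ S := by
  classical
  obtain ⟨p, hp⟩ := preconnected_induce_iff_exists_walk.1 hS a ha b hb
  exact ⟨p.bypass, p.bypass_isPath, fun z hz => hp z (p.support_bypass_subset_support hz)⟩

theorem IsAcyclic.mem_of_preconnected_induce (hT : T.IsAcyclic) {S : Set ι}
    (hS : (T.induce S).Preconnected) {a b : ι} (ha : a ∈ S) (hb : b ∈ S) {p : T.Walk a b}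
    (hp : p.IsPath) : ∀ z ∈ p.support, z ∈ S := by
  obtain ⟨q, hq, hqS⟩ := hS.exists_isPath_induce ha hb
  obtain rfl : p = q := congrArg Subtype.val ((hT.subsingleton_path a b).elim ⟨p, hp⟩ ⟨q, hq⟩)
  exact hqS

theorem IsAcyclic.preconnected_induce_inter (hT : T.IsAcyclic) {S₁ S₂ : Set ι}
    (h₁ : (T.induce S₁).Preconnected) (h₂ : (T.induce S₂).Preconnected) :
    (T.induce (S₁ ∩ S₂)).Preconnected := by
  refine preconnected_induce_iff_exists_walk.2 fun a ha b hb => ?_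
  obtain ⟨p, hp, hpS⟩ := h₁.exists_isPath_induce ha.1 hb.1
  exact ⟨p, fun z hz => ⟨hpS z hz, hT.mem_of_preconnected_induce h₂ ha.2 hb.2 hp z hz⟩⟩

theorem IsAcyclic.inter_inter_nonempty (hT : T.IsAcyclic) {S₁ S₂ S₃ : Set ι}
    (h₁ : (T.induce S₁).Preconnected) (h₂ : (T.induce S₂).Preconnected)
    (h₃ : (T.induce S₃).Preconnected) (h₁₂ : (S₁ ∩ S₂).Nonempty) (h₂₃ : (S₂ ∩ S₃).Nonempty)
    (h₁₃ : (S₁ ∩ S₃).Nonempty) : (S₁ ∩ S₂ ∩ S₃).Nonempty := by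
  classical
  obtain ⟨a, ha₁, ha₂⟩ := h₁₂
  obtain ⟨b, hb₂, hb₃⟩ := h₂₃
  obtain ⟨c, hc₁, hc₃⟩ := h₁₃
  obtain ⟨p, hp, hpS⟩ := h₂.exists_isPath_induce ha₂ hb₂
  obtain ⟨r, hr, hrS⟩ := h₃.exists_isPath_induce hb₃ hc₃
  obtain ⟨m, hmr, hmp, hfirst⟩ :=
    p.exists_first_mem p.end_mem_support (S := {z | z ∈ r.support}) r.start_mem_support
  have hpath : ((p.takeUntil m hmp).append (r.dropUntil m hmr)).IsPath :=
    (hp.takeUntil hmp).append (hr.dropUntil hmr) fun z hz hz' =>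
      hfirst z hz (r.support_dropUntil_subset_support hmr hz')
  refine ⟨m, ⟨hT.mem_of_preconnected_induce h₁ ha₁ hc₁ hpath m ?_,
    hpS m (p.support_takeUntil_subset_support hmp (Walk.end_mem_support _))⟩, hrS m hmr⟩
  exact (Walk.mem_support_append_iff _ _).2 (.inl (Walk.end_mem_support _))

/-- The Helly property of subtrees. -/
theorem IsTree.exists_forall_mem_of_preconnected_induce (hT : T.IsTree) {κ : Type*} [Finite κ]
    (S : κ → Set ι) (hS : ∀ k, (T.induce (S k)).Preconnected)
    (hpair : ∀ k l, (S k ∩ S l).Nonempty) : ∃ t, ∀ k, t ∈ S k := by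
  induction κ using Finite.induction_empty_option with
  | of_equiv e ih =>
    obtain ⟨t, ht⟩ := ih (S ∘ e) (fun k => hS (e k)) fun k l => hpair (e k) (e l)
    exact ⟨t, fun k => e.apply_symm_apply k ▸ ht (e.symm k)⟩
  | h_empty => exact ⟨hT.1.nonempty.some, fun k => k.elim⟩
  | @h_option α _ ih =>
    rcases isEmpty_or_nonempty α with hα | ⟨⟨k₀⟩⟩
    · obtain ⟨t, ht, -⟩ := hpair none none
      exact ⟨t, fun k => k.casesOn ht isEmptyElim⟩
    obtain ⟨t, ht⟩ := ih (fun k => S (some k) ∩ S none)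
      (fun k => hT.2.preconnected_induce_inter (hS _) (hS _)) fun k l =>
        (hT.2.inter_inter_nonempty (hS _) (hS _) (hS _) (hpair _ _) (hpair _ _)
          (hpair _ _)).mono fun z hz => ⟨⟨hz.1.1, hz.2⟩, hz.1.2, hz.2⟩
    exact ⟨t, fun k => k.casesOn (ht k₀).2 fun k => (ht k).1⟩

end Subtrees

variable {B : Set V}

def ReachableOutside (G : SimpleGraph V) (B : Set V) (u v : V) : Prop :=
  ∃ p : G.Walk u v, ∀ z ∈ p.support, z ∉ B

namespace ReachableOutside

theorem refl {u : V} (hu : u ∉ B) : G.ReachableOutside B u u :=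
  ⟨.nil, by simpa using hu⟩

theorem symm {u v : V} (h : G.ReachableOutside B u v) : G.ReachableOutside B v u := by
  obtain ⟨p, hp⟩ := h
  exact ⟨p.reverse, fun z hz => hp z (by simpa using hz)⟩

theorem trans {u v w : V} (h : G.ReachableOutside B u v) (h' : G.ReachableOutside B v w) :
    G.ReachableOutside B u w := by
  obtain ⟨p, hp⟩ := h
  obtain ⟨q, hq⟩ := h'
  refine ⟨p.append q, fun z hz => ?_⟩
  rcases (Walk.mem_support_append_iff _ _).1 hz with hz | hz
  exacts [hp z hz, hq z hz]

theorem not_mem_left {u v : V} (h : G.ReachableOutside B u v) : u ∉ B := by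
  obtain ⟨p, hp⟩ := h
  exact hp u p.start_mem_support

theorem not_mem_right {u v : V} (h : G.ReachableOutside B u v) : v ∉ B :=
  h.symm.not_mem_left

theorem of_adj {u v : V} (h : G.Adj u v) (hu : u ∉ B) (hv : v ∉ B) :
    G.ReachableOutside B u v :=
  ⟨h.toWalk, by simp [hu, hv]⟩

end ReachableOutside

theorem Walk.reachableOutside_of_mem_support {u v z : V} (p : G.Walk u v)
    (hp : ∀ y ∈ p.support, y ∉ B) (hz : z ∈ p.support) : G.ReachableOutside B u z := by
  classical
  exact ⟨p.takeUntil z hz, fun y hy => hp y (p.support_takeUntil_subset_support hz hy)⟩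

theorem preconnected_induce_setOf_reachableOutside (c : V) :
    (G.induce {w | G.ReachableOutside B c w}).Preconnected := by
  rintro ⟨u, hu⟩ ⟨v, hv⟩
  obtain ⟨p, hp⟩ := hu.symm.trans hv
  exact ⟨p.induce _ fun z hz => hu.trans (p.reachableOutside_of_mem_support hp hz)⟩

def Attaches (G : SimpleGraph V) (B : Set V) (b c : V) : Prop :=
  ∃ w, G.ReachableOutside B c w ∧ G.Adj w b

structure Walk.MeetsOnlyAt {u v : V} (p : G.Walk u v) (B : Set V) (x : V) : Prop where
  mem : x ∈ B
  mem_support : x ∈ p.support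
  eq_of_mem : ∀ z ∈ p.support, z ∈ B → z = x

namespace Walk.MeetsOnlyAt

variable {s t x : V} {P : G.Walk s t}

theorem not_mem_of_mem_support {s' t' x' v : V} {P' : G.Walk s' t'} (hP : P.MeetsOnlyAt B x)
    (hP' : P'.MeetsOnlyAt B x') (hxx' : x ≠ x') (hv : v ∈ P.support) (hv' : v ∈ P'.support) :
    v ∉ B :=
  fun hvB => hxx' ((hP.eq_of_mem v hv hvB).symm.trans (hP'.eq_of_mem v hv' hvB))

theorem attaches (hP : P.MeetsOnlyAt B x) {v c : V} (hv : v ∈ P.support)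
    (hvc : G.ReachableOutside B v c) : G.Attaches B x c := by
  classical
  let W := (P.takeUntil v hv).reverse.append (P.takeUntil x hP.mem_support)
  have hW : ∀ z ∈ W.support, z ∈ P.support := by
    intro z hz
    rw [mem_support_append_iff, support_reverse, List.mem_reverse] at hz
    exact hz.elim (P.support_takeUntil_subset_support hv ·)
      (P.support_takeUntil_subset_support hP.mem_support ·)
  obtain ⟨d, hd, hd₁, hd₂⟩ := W.exists_boundary_dart {w | G.ReachableOutside B v w}
    (.refl hvc.not_mem_left) fun h => h.not_mem_right hP.mem
  have hd₂B : d.snd ∈ B := by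
    by_contra h
    exact hd₂ (hd₁.trans (.of_adj d.adj hd₁.not_mem_right h))
  have hd₂x := hP.eq_of_mem _ (hW _ (W.dart_snd_mem_support_of_mem_darts hd)) hd₂B
  exact ⟨d.fst, hvc.symm.trans hd₁, hd₂x ▸ d.adj⟩

end Walk.MeetsOnlyAt

/-- An ear at `x` into the component of `c`: a path leaving `x ∈ B` whose other vertices lie in
the component of `G - B` containing `c`. -/
structure Walk.IsEar {x y : V} (e : G.Walk x y) (B : Set V) (c : V) : Prop where
  isPath : e.IsPath
  meetsOnlyAt : e.MeetsOnlyAt B x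
  reachableOutside : ∀ z ∈ e.support, z ∉ B → G.ReachableOutside B z c

namespace Walk

theorem IsEar.disjoint_support {x y x' y' c c' : V} {e : G.Walk x y} {e' : G.Walk x' y'}
    (he : e.IsEar B c) (he' : e'.IsEar B c') (hxx' : x ≠ x')
    (hcc' : ¬G.ReachableOutside B c c') : e.support.Disjoint e'.support := by
  intro z hz hz'
  by_cases hzB : z ∈ B
  · exact he.meetsOnlyAt.not_mem_of_mem_support he'.meetsOnlyAt hxx' hz hz' hzB
  · exact hcc' ((he.reachableOutside z hz hzB).symm.trans (he'.reachableOutside z hz' hzB))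

theorem IsPath.isEar {x y a : V} {e : G.Walk x y} (he : e.IsPath) (heB : e.MeetsOnlyAt B x)
    (ha : a ∈ e.support) (haB : a ∉ B) : e.IsEar B a := by
  refine ⟨he, heB, ?_⟩
  cases e with
  | nil =>
    rw [support_nil, List.mem_singleton] at ha
    exact absurd (ha ▸ heB.mem) haB
  | @cons _ u _ h e' =>
    have hout : ∀ z ∈ e'.support, z ∉ B := fun z hz hzB =>
      (cons_isPath_iff _ _).1 he |>.2 (heB.eq_of_mem z (by simp [hz]) hzB ▸ hz)
    have hreach : ∀ z ∈ (cons h e').support, z ∉ B → G.ReachableOutside B u z := by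
      intro z hz hzB
      rw [support_cons, List.mem_cons] at hz
      rcases hz with rfl | hz
      · exact absurd heB.mem hzB
      · exact e'.reachableOutside_of_mem_support hout hz
    exact fun z hz hzB => (hreach z hz hzB).symm.trans (hreach a ha haB)

theorem MeetsOnlyAt.exists_ears {s t x a b : V} {P : G.Walk s t} (hP : P.IsPath)
    (hPB : P.MeetsOnlyAt B x) (ha : a ∈ P.support) (haB : a ∉ B) (hb : b ∈ P.support)
    (hbB : b ∉ B) (hab : ¬G.ReachableOutside B a b) :
    ∃ (y y' : V) (A : G.Walk x y) (O : G.Walk x y'), A.IsEar B a ∧ O.IsEar B b ∧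
      a ∈ A.support ∧ b ∈ O.support ∧ A.length + O.length = P.length ∧
      (∀ z ∈ P.support, z ∈ A.support ∨ z ∈ O.support) ∧
      ∀ z ∈ A.support, z ∈ O.support → z = x := by
  obtain ⟨q, r, hq, hr, hlen, hcov, hqr⟩ := hP.exists_split hPB.mem_support
  have hqB : q.MeetsOnlyAt B x :=
    ⟨hPB.mem, q.start_mem_support, fun z hz => hPB.eq_of_mem z ((hcov z).2 (.inl hz))⟩
  have hrB : r.MeetsOnlyAt B x :=
    ⟨hPB.mem, r.start_mem_support, fun z hz => hPB.eq_of_mem z ((hcov z).2 (.inr hz))⟩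
  rcases (hcov a).1 ha with haq | har <;> rcases (hcov b).1 hb with hbq | hbr
  · exact absurd ((hq.isEar hqB hbq hbB).reachableOutside a haq haB) hab
  · exact ⟨_, _, q, r, hq.isEar hqB haq haB, hr.isEar hrB hbr hbB, haq, hbr, hlen,
      fun z hz => (hcov z).1 hz, hqr⟩
  · exact ⟨_, _, r, q, hr.isEar hrB har haB, hq.isEar hqB hbq hbB, har, hbq, by omega,
      fun z hz => ((hcov z).1 hz).symm, fun z hz hz' => hqr z hz' hz⟩
  · exact absurd ((hr.isEar hrB hbr hbB).reachableOutside a har haB) hab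

theorem MeetsOnlyAt.reachableOutside_or {s t x a b c : V} {P : G.Walk s t} (hP : P.IsPath)
    (hPB : P.MeetsOnlyAt B x) (ha : a ∈ P.support) (haB : a ∉ B) (hb : b ∈ P.support)
    (hbB : b ∉ B) (hab : ¬G.ReachableOutside B a b) (hc : c ∈ P.support) (hcB : c ∉ B) :
    G.ReachableOutside B c a ∨ G.ReachableOutside B c b := by
  obtain ⟨_, _, A, O, hA, hO, -, -, -, hcov, -⟩ := hPB.exists_ears hP ha haB hb hbB hab
  exact (hcov c hc).imp (hA.reachableOutside c · hcB) (hO.reachableOutside c · hcB)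

/-- Rerouting through a common vertex of `A` and `A'` joins the complementary ears `E` and `E'`
into one path. -/
theorem IsEar.length_add_length_add_two_le {L : ℕ}
    (hL : ∀ ⦃a b : V⦄ (q : G.Walk a b), q.IsPath → q.length ≤ L)
    {x x' y y' z z' c e e' v : V} (hxx' : x ≠ x') {E : G.Walk x y} {A : G.Walk x z}
    {E' : G.Walk x' y'} {A' : G.Walk x' z'}
    (hE : E.IsEar B e) (hA : A.IsEar B c) (hEA : ∀ w ∈ E.support, w ∈ A.support → w = x)
    (hE' : E'.IsEar B e') (hA' : A'.IsEar B c)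
    (hE'A' : ∀ w ∈ E'.support, w ∈ A'.support → w = x')
    (hce : ¬G.ReachableOutside B c e) (hce' : ¬G.ReachableOutside B c e')
    (hee' : ¬G.ReachableOutside B e e') (hv : v ∈ A.support) (hv' : v ∈ A'.support) :
    E.length + E'.length + 2 ≤ L := by
  have hx : x ∉ A'.support := fun h => hxx' (hA'.meetsOnlyAt.eq_of_mem x h hA.meetsOnlyAt.mem)
  have hx' : x' ∉ A.support :=
    fun h => hxx' (hA.meetsOnlyAt.eq_of_mem x' h hA'.meetsOnlyAt.mem).symm
  obtain ⟨R, hR, hRlen, hRsub⟩ := hA.isPath.exists_joining_isPath hA'.isPath hx hx' hv hv'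
  have hEA' := hE.disjoint_support hA' hxx' fun h => hce h.symm
  have hAE' := hA.disjoint_support hE' hxx' hce'
  have hEE' := hE.disjoint_support hE' hxx' hee'
  have hpath : (E.reverse.append (R.append E')).IsPath := by
    refine hE.isPath.reverse.append (hR.append hE'.isPath fun w hw hw' => ?_) fun w hw hw' => ?_
    · exact (hRsub w hw).elim (fun h => (hAE' h hw').elim) (hE'A' w hw')
    · rw [support_reverse, List.mem_reverse] at hw
      rcases (mem_support_append_iff _ _).1 hw' with h | h
      · exact (hRsub w h).elim (hEA w hw) fun h => (hEA' hw h).elim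
      · exact (hEE' hw h).elim
  have hlen := hL _ hpath
  rw [length_append, length_append, length_reverse] at hlen
  omega

end Walk

theorem false_of_three_pairwise_separated {x₁ x₂ x₃ s₁ t₁ s₂ t₂ s₃ t₃ v₁₂ v₁₃ v₂₃ : V}
    {P₁ : G.Walk s₁ t₁} {P₂ : G.Walk s₂ t₂} {P₃ : G.Walk s₃ t₃}
    (hP₁ : IsLongestPath G P₁) (hP₂ : IsLongestPath G P₂) (hP₃ : IsLongestPath G P₃)
    (hB₁ : P₁.MeetsOnlyAt B x₁) (hB₂ : P₂.MeetsOnlyAt B x₂) (hB₃ : P₃.MeetsOnlyAt B x₃)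
    (h₁₂ : x₁ ≠ x₂) (h₁₃ : x₁ ≠ x₃) (h₂₃ : x₂ ≠ x₃)
    (hv₁₂ : v₁₂ ∈ P₁.support ∧ v₁₂ ∈ P₂.support) (hv₁₃ : v₁₃ ∈ P₁.support ∧ v₁₃ ∈ P₃.support)
    (hv₂₃ : v₂₃ ∈ P₂.support ∧ v₂₃ ∈ P₃.support)
    (hn₁ : ¬G.ReachableOutside B v₁₂ v₁₃) (hn₂ : ¬G.ReachableOutside B v₁₂ v₂₃)
    (hn₃ : ¬G.ReachableOutside B v₁₃ v₂₃) : False := by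
  have hv₁₂B := hB₁.not_mem_of_mem_support hB₂ h₁₂ hv₁₂.1 hv₁₂.2
  have hv₁₃B := hB₁.not_mem_of_mem_support hB₃ h₁₃ hv₁₃.1 hv₁₃.2
  have hv₂₃B := hB₂.not_mem_of_mem_support hB₃ h₂₃ hv₂₃.1 hv₂₃.2
  obtain ⟨_, _, A₁, O₁, hA₁, hO₁, h₁A, h₁O, hlen₁, -, hAO₁⟩ :=
    hB₁.exists_ears hP₁.1 hv₁₂.1 hv₁₂B hv₁₃.1 hv₁₃B hn₁
  obtain ⟨_, _, A₂, O₂, hA₂, hO₂, h₂A, h₂O, hlen₂, -, hAO₂⟩ :=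
    hB₂.exists_ears hP₂.1 hv₁₂.2 hv₁₂B hv₂₃.1 hv₂₃B hn₂
  obtain ⟨_, _, A₃, O₃, hA₃, hO₃, h₃A, h₃O, hlen₃, -, hAO₃⟩ :=
    hB₃.exists_ears hP₃.1 hv₁₃.2 hv₁₃B hv₂₃.2 hv₂₃B hn₃
  have c₁₂ := hO₁.length_add_length_add_two_le hP₁.2 h₁₂ hA₁ (fun w hw hw' => hAO₁ w hw' hw)
    hO₂ hA₂ (fun w hw hw' => hAO₂ w hw' hw) hn₁ hn₂ hn₃ h₁A h₂A
  have c₁₃ := hA₁.length_add_length_add_two_le hP₁.2 h₁₃ hO₁ hAO₁ hO₃ hA₃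
    (fun w hw hw' => hAO₃ w hw' hw) (fun h => hn₁ h.symm) hn₃ hn₂ h₁O h₃A
  have c₂₃ := hA₂.length_add_length_add_two_le hP₁.2 h₂₃ hO₂ hAO₂ hA₃ hO₃ hAO₃
    (fun h => hn₂ h.symm) (fun h => hn₃ h.symm) hn₁ h₂O h₃O
  have := hP₁.length_eq hP₂
  have := hP₁.length_eq hP₃
  omega

theorem false_of_two_meet_component (hG : G.Connected) {x x' u c q q' s t s' t' sq tq : V}
    {P : G.Walk s t} {P' : G.Walk s' t'} {Q : G.Walk sq tq}
    (hP : IsLongestPath G P) (hP' : IsLongestPath G P') (hQ : IsLongestPath G Q)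
    (hPB : P.MeetsOnlyAt B x) (hP'B : P'.MeetsOnlyAt B x') (hQB : Q.MeetsOnlyAt B u)
    (hxx' : x ≠ x') (hxu : x ≠ u) (hx'u : x' ≠ u)
    (hPc : ∃ p ∈ P.support, G.ReachableOutside B p c)
    (hP'c : ∃ p ∈ P'.support, G.ReachableOutside B p c)
    (hq : q ∈ P.support ∧ q ∈ Q.support) (hq' : q' ∈ P'.support ∧ q' ∈ Q.support)
    (hqc : ¬G.ReachableOutside B q c) (hq'c : ¬G.ReachableOutside B q' c)
    (hqq' : ¬G.ReachableOutside B q q') : False := by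
  obtain ⟨p, hp, hpc⟩ := hPc
  obtain ⟨p', hp', hp'c⟩ := hP'c
  obtain ⟨v, hv, hv'⟩ := hP.exists_mem_support_mem_support hG hP'
  have hvB := hPB.not_mem_of_mem_support hP'B hxx' hv hv'
  have hqB := hPB.not_mem_of_mem_support hQB hxu hq.1 hq.2
  have hq'B := hP'B.not_mem_of_mem_support hQB hx'u hq'.1 hq'.2
  have hvc : G.ReachableOutside B v c := by
    rcases hPB.reachableOutside_or hP.1 hp hpc.not_mem_left hq.1 hqB
      (fun h => hqc (h.symm.trans hpc)) hv hvB with h | h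
    · exact h.trans hpc
    rcases hP'B.reachableOutside_or hP'.1 hp' hp'c.not_mem_left hq'.1 hq'B
      (fun h => hq'c (h.symm.trans hp'c)) hv' hvB with h' | h'
    · exact h'.trans hp'c
    · exact absurd (h.symm.trans h') hqq'
  exact false_of_three_pairwise_separated hP hP' hQ hPB hP'B hQB hxx' hxu hx'u ⟨hv, hv'⟩ hq hq'
    (fun h => hqc (h.symm.trans hvc)) (fun h => hq'c (h.symm.trans hvc)) hqq'

theorem false_of_three_meet_component (hG : G.Connected) {B : Finset V} (hB : B.card ≤ 4)
    (hatt : ∀ c ∉ B, ∃ b ∈ B, ¬G.Attaches B b c)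
    (hsolo : ∀ u ∈ B, ∃ (s t : V) (Q : G.Walk s t), IsLongestPath G Q ∧ Q.MeetsOnlyAt B u)
    {x y z c s t s' t' s'' t'' : V} {P : G.Walk s t} {P' : G.Walk s' t'} {P'' : G.Walk s'' t''}
    (hP : IsLongestPath G P) (hP' : IsLongestPath G P') (hP'' : IsLongestPath G P'')
    (hPB : P.MeetsOnlyAt B x) (hP'B : P'.MeetsOnlyAt B y) (hP''B : P''.MeetsOnlyAt B z)
    (hxy : x ≠ y) (hxz : x ≠ z) (hyz : y ≠ z)
    (hPc : ∃ p ∈ P.support, G.ReachableOutside B p c)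
    (hP'c : ∃ p ∈ P'.support, G.ReachableOutside B p c)
    (hP''c : ∃ p ∈ P''.support, G.ReachableOutside B p c) : False := by
  classical
  obtain ⟨p, hp, hpc⟩ := hPc
  obtain ⟨p', hp', hp'c⟩ := hP'c
  obtain ⟨p'', hp'', hp''c⟩ := hP''c
  obtain ⟨u, huB, hu⟩ := hatt c hpc.not_mem_right
  have hxu : x ≠ u := by rintro rfl; exact hu (hPB.attaches hp hpc)
  have hyu : y ≠ u := by rintro rfl; exact hu (hP'B.attaches hp' hp'c)
  have hzu : z ≠ u := by rintro rfl; exact hu (hP''B.attaches hp'' hp''c)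
  have hBeq : B = {x, y, z, u} := by
    refine (Finset.eq_of_subset_of_card_le ?_ ?_).symm
    · exact Finset.insert_subset hPB.mem <| Finset.insert_subset hP'B.mem <|
        Finset.insert_subset hP''B.mem <| Finset.singleton_subset_iff.2 huB
    · rw [Finset.card_insert_of_notMem (by simp [hxy, hxz, hxu]),
        Finset.card_insert_of_notMem (by simp [hyz, hyu]),
        Finset.card_insert_of_notMem (by simp [hzu]), Finset.card_singleton]
      exact hB
  obtain ⟨_, _, Q, hQ, hQB⟩ := hsolo u huB
  have hQc : ∀ q ∈ Q.support, ¬G.ReachableOutside B q c := fun q hq hqc => hu (hQB.attaches hq hqc)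
  obtain ⟨qx, hqx, hqxQ⟩ := hP.exists_mem_support_mem_support hG hQ
  obtain ⟨qy, hqy, hqyQ⟩ := hP'.exists_mem_support_mem_support hG hQ
  obtain ⟨qz, hqz, hqzQ⟩ := hP''.exists_mem_support_mem_support hG hQ
  by_cases hall : G.ReachableOutside B qx qy ∧ G.ReachableOutside B qx qz
  · have hqxB := hPB.not_mem_of_mem_support hQB hxu hqx hqxQ
    obtain ⟨b, hb, hnb⟩ := hatt qx hqxB
    rw [hBeq] at hb
    simp only [Finset.mem_insert, Finset.mem_singleton] at hb
    rcases hb with rfl | rfl | rfl | rfl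
    · exact hnb (hPB.attaches hqx (.refl hqxB))
    · exact hnb (hP'B.attaches hqy hall.1.symm)
    · exact hnb (hP''B.attaches hqz hall.2.symm)
    · exact hnb (hQB.attaches hqxQ (.refl hqxB))
  rcases not_and_or.1 hall with h | h
  · exact false_of_two_meet_component hG hP hP' hQ hPB hP'B hQB hxy hxu hyu ⟨p, hp, hpc⟩
      ⟨p', hp', hp'c⟩ ⟨hqx, hqxQ⟩ ⟨hqy, hqyQ⟩ (hQc _ hqxQ) (hQc _ hqyQ) h
  · exact false_of_two_meet_component hG hP hP'' hQ hPB hP''B hQB hxz hxu hzu ⟨p, hp, hpc⟩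
      ⟨p'', hp'', hp''c⟩ ⟨hqx, hqxQ⟩ ⟨hqz, hqzQ⟩ (hQc _ hqxQ) (hQc _ hqzQ) h

theorem false_of_forall_meetsOnlyAt (hG : G.Connected) {B : Finset V} (hB : B.card = 4)
    (hatt : ∀ c ∉ B, ∃ b ∈ B, ¬G.Attaches B b c)
    (hsolo : ∀ x ∈ B, ∃ (s t : V) (P : G.Walk s t), IsLongestPath G P ∧ P.MeetsOnlyAt B x) :
    False := by
  classical
  obtain ⟨a, ha⟩ : B.Nonempty := Finset.card_pos.1 (by omega)
  obtain ⟨x, y, z, hxy, hxz, hyz, hxyz⟩ :=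
    Finset.card_eq_three.1 (show (B.erase a).card = 3 by rw [Finset.card_erase_of_mem ha, hB])
  have hmem : ∀ w ∈ ({x, y, z} : Finset V), w ≠ a ∧ w ∈ B := fun w hw =>
    Finset.mem_erase.1 (hxyz ▸ hw)
  obtain ⟨hxa, hx⟩ := hmem x (by simp)
  obtain ⟨hya, hy⟩ := hmem y (by simp)
  obtain ⟨hza, hz⟩ := hmem z (by simp)
  obtain ⟨_, _, Pa, hPa, hPaB⟩ := hsolo a ha
  obtain ⟨_, _, Px, hPx, hPxB⟩ := hsolo x hx
  obtain ⟨_, _, Py, hPy, hPyB⟩ := hsolo y hy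
  obtain ⟨_, _, Pz, hPz, hPzB⟩ := hsolo z hz
  obtain ⟨wx, hwxa, hwx⟩ := hPa.exists_mem_support_mem_support hG hPx
  obtain ⟨wy, hwya, hwy⟩ := hPa.exists_mem_support_mem_support hG hPy
  obtain ⟨wz, hwza, hwz⟩ := hPa.exists_mem_support_mem_support hG hPz
  have hwxB := hPaB.not_mem_of_mem_support hPxB hxa.symm hwxa hwx
  have hwyB := hPaB.not_mem_of_mem_support hPyB hya.symm hwya hwy
  have hwzB := hPaB.not_mem_of_mem_support hPzB hza.symm hwza hwz
  by_cases hxy' : G.ReachableOutside B wx wy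
  · exact false_of_three_meet_component hG hB.le hatt hsolo hPa hPx hPy hPaB hPxB hPyB
      hxa.symm hya.symm hxy ⟨wx, hwxa, .refl hwxB⟩ ⟨wx, hwx, .refl hwxB⟩ ⟨wy, hwy, hxy'.symm⟩
  rcases hPaB.reachableOutside_or hPa.1 hwxa hwxB hwya hwyB hxy' hwza hwzB with h | h
  · exact false_of_three_meet_component hG hB.le hatt hsolo hPa hPx hPz hPaB hPxB hPzB
      hxa.symm hza.symm hxz ⟨wx, hwxa, .refl hwxB⟩ ⟨wx, hwx, .refl hwxB⟩ ⟨wz, hwz, h⟩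
  · exact false_of_three_meet_component hG hB.le hatt hsolo hPa hPy hPz hPaB hPyB hPzB
      hya.symm hza.symm hyz ⟨wy, hwya, .refl hwyB⟩ ⟨wy, hwy, .refl hwyB⟩ ⟨wz, hwz, h⟩

end SimpleGraph

namespace TreeDecomp

variable {V ι : Type*} {G : SimpleGraph V} {T : SimpleGraph ι} (D : TreeDecomp G T)

def nodes (U : Set V) : Set ι := {t | ∃ v ∈ U, v ∈ D.bag t}

theorem preconnected_induce_nodes_support {u v : V} (p : G.Walk u v) :
    (T.induce (D.nodes {z | z ∈ p.support})).Preconnected := by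
  induction p with
  | @nil u =>
    have hnodes : D.nodes {z | z ∈ (Walk.nil : G.Walk u u).support} = {t | u ∈ D.bag t} := by
      ext t
      simp [nodes]
    rw [hnodes]
    exact D.bag_conn u
  | @cons u w _ h p ih =>
    have hnodes : D.nodes {z | z ∈ (Walk.cons h p).support} =
        {t | u ∈ D.bag t} ∪ D.nodes {z | z ∈ p.support} := by
      ext t
      simp [nodes]
    obtain ⟨t, hu, hw⟩ := D.bag_edge h
    rw [hnodes]
    exact (induce_union_connected (D.bag_conn u) ih
      ⟨t, hu, w, p.start_mem_support, hw⟩).preconnected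

theorem preconnected_induce_nodes {U : Set V} (hU : (G.induce U).Preconnected) :
    (T.induce (D.nodes U)).Preconnected := by
  refine preconnected_induce_iff_exists_walk.2 fun a ⟨u, hu, hua⟩ b ⟨v, hv, hvb⟩ => ?_
  obtain ⟨p, hp⟩ := preconnected_induce_iff_exists_walk.1 hU u hu v hv
  obtain ⟨q, hq⟩ := preconnected_induce_iff_exists_walk.1 (D.preconnected_induce_nodes_support p)
    a ⟨u, p.start_mem_support, hua⟩ b ⟨v, p.end_mem_support, hvb⟩
  exact ⟨q, fun t ht => let ⟨z, hz, hzt⟩ := hq t ht; ⟨z, hp z hz, hzt⟩⟩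

theorem exists_forall_mem_nodes [Finite ι] {κ : Type*} (U : κ → Set V)
    (hU : ∀ k, (G.induce (U k)).Preconnected)
    (hpair : ∀ k l, (D.nodes (U k) ∩ D.nodes (U l)).Nonempty) : ∃ t, ∀ k, t ∈ D.nodes (U k) := by
  obtain ⟨t, ht⟩ := D.isTree.exists_forall_mem_of_preconnected_induce
    (κ := Set.range fun k => D.nodes (U k)) (fun A => A.1)
    (by rintro ⟨_, k, rfl⟩; exact D.preconnected_induce_nodes (hU k))
    (by rintro ⟨_, k, rfl⟩ ⟨_, l, rfl⟩; exact hpair k l)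
  exact ⟨t, fun k => ht ⟨_, k, rfl⟩⟩

theorem exists_bag_meets_isLongestPath [Finite ι] (hG : G.Connected) :
    ∃ t, ∀ ⦃u v : V⦄ (p : G.Walk u v), IsLongestPath G p → ∃ z ∈ p.support, z ∈ D.bag t := by
  obtain ⟨t, ht⟩ := D.exists_forall_mem_nodes
    (κ := {q : Σ u v, G.Walk u v // IsLongestPath G q.2.2}) (fun q => {z | z ∈ q.1.2.2.support})
    (fun q => q.1.2.2.connected_induce_support.preconnected) fun q r => by
      obtain ⟨z, hz, hz'⟩ := q.2.exists_mem_support_mem_support hG r.2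
      obtain ⟨t, ht⟩ := D.bag_cover z
      exact ⟨t, ⟨z, hz, ht⟩, z, hz', ht⟩
  exact ⟨t, fun u v p hp => ht ⟨⟨u, v, p⟩, hp⟩⟩

/-- A common node of the subtrees of the component of `c` and of all vertices of `bag t₀` would
hold one vertex more than `bag t₀`. -/
theorem exists_not_attaches [Finite ι] {t₀ : ι} (hmax : ∀ t, (D.bag t).card ≤ (D.bag t₀).card)
    {c : V} (hc : c ∉ D.bag t₀) : ∃ b ∈ D.bag t₀, ¬G.Attaches (D.bag t₀) b c := by
  classical
  by_contra! hatt
  set B := D.bag t₀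
  let U : Option B → Set V := fun o => o.elim {w | G.ReachableOutside B c w} fun b => {b.1}
  have hU : ∀ o, (G.induce (U o)).Preconnected := by
    rintro (_ | b)
    · exact preconnected_induce_setOf_reachableOutside c
    · exact (Preconnected.of_subsingleton : (G.induce {b.1}).Preconnected)
  have hcomp : ∀ b ∈ B, (D.nodes (U none) ∩ D.nodes {b}).Nonempty := fun b hb => by
    obtain ⟨w, hcw, hwb⟩ := hatt b hb
    obtain ⟨t, hw, hb⟩ := D.bag_edge hwb
    exact ⟨t, ⟨w, hcw, hw⟩, b, rfl, hb⟩
  have hpair : ∀ o o', (D.nodes (U o) ∩ D.nodes (U o')).Nonempty := by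
    rintro (_ | ⟨b, hb⟩) (_ | ⟨b', hb'⟩)
    · obtain ⟨t, ht⟩ := D.bag_cover c
      exact ⟨t, ⟨c, .refl hc, ht⟩, c, .refl hc, ht⟩
    · exact hcomp b' hb'
    · exact (hcomp b hb).mono fun t ht => ⟨ht.2, ht.1⟩
    · exact ⟨t₀, ⟨b, rfl, hb⟩, b', rfl, hb'⟩
  obtain ⟨r, hr⟩ := D.exists_forall_mem_nodes U hU hpair
  obtain ⟨w, hcw, hwr⟩ := hr none
  have hBr : B ⊆ D.bag r := fun b hb => by
    obtain ⟨_, rfl, hbr⟩ := hr (some ⟨b, hb⟩)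
    exact hbr
  have := Finset.card_le_card (Finset.insert_subset hwr hBr)
  rw [Finset.card_insert_of_notMem hcw.not_mem_right] at this
  exact absurd (hmax r) (by omega)

end TreeDecomp

theorem lpt_le_three_of_partial_three_tree_general {V ι : Type*} [Fintype ι]
    (G : SimpleGraph V) (T : SimpleGraph ι) (hconn : G.Connected)
    (D : TreeDecomp G T) (hwidth : ∀ t : ι, (D.bag t).card ≤ 4) :
    ∃ S : Finset V, S.card ≤ 3 ∧
      ∀ ⦃u v : V⦄ (p : G.Walk u v), IsLongestPath G p → ∃ x ∈ S, x ∈ p.support := by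
  classical
  obtain ⟨t₀, hmeet⟩ := D.exists_bag_meets_isLongestPath hconn
  by_contra! hS
  have hB : (D.bag t₀).card = 4 := by
    refine le_antisymm (hwidth t₀) (not_lt.1 fun hB => ?_)
    obtain ⟨u, v, p, hp, hpB⟩ := hS (D.bag t₀) (by omega)
    obtain ⟨z, hz, hzB⟩ := hmeet p hp
    exact hpB z hzB hz
  refine false_of_forall_meetsOnlyAt hconn hB
    (fun c hc => D.exists_not_attaches (fun t => hB ▸ hwidth t) hc) fun x hx => ?_
  obtain ⟨u, v, p, hp, hpx⟩ := hS ((D.bag t₀).erase x) (by rw [Finset.card_erase_of_mem hx, hB])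
  have honly : ∀ z ∈ p.support, z ∈ D.bag t₀ → z = x := fun z hz hzB =>
    by_contra fun hzx => hpx z (Finset.mem_erase.2 ⟨hzx, hzB⟩) hz
  obtain ⟨z, hz, hzB⟩ := hmeet p hp
  exact ⟨u, v, p, hp, hx, honly z hz hzB ▸ hz, honly⟩

/-- If a finite connected graph `G` with at least two vertices admits a tree
decomposition of width at most 3 (i.e. `G` is a connected partial 3-tree), then
`lpt(G) ≤ 3`. -/
theorem lpt_le_three_of_partial_three_tree {V ι : Type*} [Fintype V] [Fintype ι]
    (G : SimpleGraph V) (T : SimpleGraph ι) (hconn : G.Connected)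
    (hcard : 2 ≤ Fintype.card V)
    (D : TreeDecomp G T) (hwidth : ∀ t : ι, (D.bag t).card ≤ 4) :
    ∃ S : Finset V, S.card ≤ 3 ∧
      ∀ ⦃u v : V⦄ (p : G.Walk u v), IsLongestPath G p → ∃ x ∈ S, x ∈ p.support :=
  lpt_le_three_of_partial_three_tree_general G T hconn D hwidth
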